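/- Let n, m ≥ 1. Let Λ be an n×n real diagonal matrix with strictly positive diagonal entries, let H and R be n×n real matrices, B an n×m real matrix, K an m×n real matrix, and let μ > 0 satisfy e^{−μ} λ_max(Λ) λ_max(H Λ⁻¹ Hᵀ + I) ≤ 1, where λ_max(Λ) is the largest diagonal entry of Λ and λ_max(H Λ⁻¹ Hᵀ + I) is the largest eigenvalue of the symmetric positive definite matrix H Λ⁻¹ Hᵀ + I. Then there exists a constant C > 0 such that for every continuously differentiable ψ : [0,1] → ℝⁿ and every θ ∈ ℝⁿ with ψ(1) = e^{−μ} Λ⁻¹ Hᵀ Λ ψ(0), one has: ∫₀¹ (ψ′(z) + μ ψ(z))ᵀ Λ ψ(z) e^{μ(z−1)} dz + θᵀ (e^{−μ} Kᵀ Bᵀ Λ ψ(0) + Rᵀ θ) ≤ C · (∫₀¹ |ψ(z)|² e^{μ(z−1)} dz + |θ|²). -/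

import Mathlib

open Matrix Set Real

/-! Integrating by parts against the weight `e^{μ(z-1)}`, the `ψ`-part of the form equals
`½ [ψᵀΛψ e^{μ(z-1)}]₀¹ + (μ/2) ∫ ψᵀΛψ e^{μ(z-1)}`. On the domain `ψ(1) = e^{-μ} Λ⁻¹HᵀΛ ψ(0)`,
and the Loewner condition makes the boundary term at most `-½ e^{-2μ} |Λψ(0)|²`. This negative
term absorbs, by Young's inequality, the point evaluation `e^{-μ} θᵀKᵀBᵀΛψ(0)`, which the weighted
`L²` norm of `ψ` does not control; the remaining terms are bounded using `λ_max(Λ)` and the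
Frobenius norms of `KᵀBᵀ` and `Rᵀ`. -/

theorem EuclideanSpace.norm_sq_eq_dotProduct {ι : Type*} [Fintype ι] (x : EuclideanSpace ℝ ι) :
    ‖x‖ ^ 2 = x ⬝ᵥ x := by
  rw [EuclideanSpace.real_norm_sq_eq]
  simp only [dotProduct, sq]

namespace Matrix

variable {ι κ : Type*} [Fintype ι] [Fintype κ]

theorem two_mul_dotProduct_le_add (u w : ι → ℝ) : 2 * (u ⬝ᵥ w) ≤ u ⬝ᵥ u + w ⬝ᵥ w := by
  simp only [dotProduct, Finset.mul_sum, ← Finset.sum_add_distrib]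
  exact Finset.sum_le_sum fun i _ => by nlinarith [sq_nonneg (u i - w i)]

theorem vecMul_dotProduct_self_le (A : Matrix ι κ ℝ) (x : ι → ℝ) :
    (x ᵥ* A) ⬝ᵥ (x ᵥ* A) ≤ (∑ i, ∑ j, A i j ^ 2) * (x ⬝ᵥ x) := by
  rw [Finset.sum_comm, Finset.sum_mul]
  refine Finset.sum_le_sum fun j _ => ?_
  have := Finset.sum_mul_sq_le_sq_mul_sq Finset.univ x (fun i => A i j)
  simp only [vecMul, dotProduct, ← sq] at this ⊢
  linarith

theorem two_mul_dotProduct_mulVec_le (A : Matrix ι κ ℝ) (x : ι → ℝ) (y : κ → ℝ) :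
    2 * (x ⬝ᵥ A *ᵥ y) ≤ y ⬝ᵥ y + (∑ i, ∑ j, A i j ^ 2) * (x ⬝ᵥ x) := by
  rw [dotProduct_mulVec, dotProduct_comm]
  linarith [two_mul_dotProduct_le_add y (x ᵥ* A), vecMul_dotProduct_self_le A x]

variable [DecidableEq ι]

theorem dotProduct_diagonal_mulVec_le {d : ι → ℝ} {c : ℝ} (hd : ∀ i, d i ≤ c) (x : ι → ℝ) :
    x ⬝ᵥ diagonal d *ᵥ x ≤ c * (x ⬝ᵥ x) := by
  simp only [dotProduct, mulVec_diagonal, Finset.mul_sum]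
  exact Finset.sum_le_sum fun i _ => by nlinarith [hd i, mul_self_nonneg (x i)]

theorem diagonal_mulVec_dotProduct_self_le {d : ι → ℝ} {c : ℝ} (hd : ∀ i, 0 ≤ d i ∧ d i ≤ c)
    (x : ι → ℝ) : (diagonal d *ᵥ x) ⬝ᵥ (diagonal d *ᵥ x) ≤ c * (x ⬝ᵥ diagonal d *ᵥ x) := by
  simp only [dotProduct, mulVec_diagonal, Finset.mul_sum]
  exact Finset.sum_le_sum fun i _ => by
    nlinarith [mul_le_mul_of_nonneg_right (hd i).2 (mul_nonneg (hd i).1 (mul_self_nonneg (x i)))]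

theorem dotProduct_diagonal_mulVec_sub_le_of_posSemidef {l : ι → ℝ} (hl : ∀ i, 0 < l i)
    {L a : ℝ} (hlL : ∀ i, l i ≤ L) (hL : 0 < L) (ha : 0 ≤ a) {H : Matrix ι ι ℝ}
    (hcond : (1 - (a * L) • (H * (diagonal l)⁻¹ * Hᵀ + 1)).PosSemidef) {x y : ι → ℝ}
    (hy : y = a • (((diagonal l)⁻¹ * Hᵀ * diagonal l) *ᵥ x)) :
    y ⬝ᵥ diagonal l *ᵥ y - a * (x ⬝ᵥ diagonal l *ᵥ x) ≤
      -(a ^ 2 * ((diagonal l *ᵥ x) ⬝ᵥ (diagonal l *ᵥ x))) := by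
  set Λ := diagonal l
  set v := Λ *ᵥ x
  set w := Hᵀ *ᵥ v
  have hΛinv : Λ * Λ⁻¹ = 1 := mul_nonsing_inv _ <| by
    simpa [Λ, det_diagonal, isUnit_iff_ne_zero, Finset.prod_ne_zero_iff] using fun i => (hl i).ne'
  have hy' : y = a • Λ⁻¹ *ᵥ w := by simp only [hy, w, v, ← mulVec_mulVec]
  have hΛy : Λ *ᵥ y = a • w := by rw [hy', mulVec_smul, mulVec_mulVec, hΛinv, one_mulVec]
  have hQ : v ⬝ᵥ (H * Λ⁻¹ * Hᵀ) *ᵥ v = w ⬝ᵥ Λ⁻¹ *ᵥ w := by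
    simp only [← mulVec_mulVec]
    rw [dotProduct_mulVec, ← mulVec_transpose]
  have hyΛy : y ⬝ᵥ Λ *ᵥ y = a ^ 2 * (v ⬝ᵥ (H * Λ⁻¹ * Hᵀ) *ᵥ v) := by
    rw [hΛy, hy', hQ, smul_dotProduct, dotProduct_smul, dotProduct_comm, smul_eq_mul, smul_eq_mul]
    ring
  have hpsd := hcond.dotProduct_mulVec_nonneg v
  simp only [star_trivial, sub_mulVec, smul_mulVec, add_mulVec, one_mulVec, dotProduct_sub,
    dotProduct_smul, dotProduct_add, smul_eq_mul] at hpsd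
  have hv : v ⬝ᵥ v ≤ L * (x ⬝ᵥ Λ *ᵥ x) :=
    diagonal_mulVec_dotProduct_self_le (fun i => ⟨(hl i).le, hlL i⟩) x
  have hdom : a * (v ⬝ᵥ (H * Λ⁻¹ * Hᵀ) *ᵥ v + v ⬝ᵥ v) ≤ x ⬝ᵥ Λ *ᵥ x := by
    refine le_of_mul_le_mul_left ?_ hL
    nlinarith
  rw [hyΛy]
  nlinarith [mul_le_mul_of_nonneg_left hdom ha]

end Matrix

theorem integral_add_mul_mul_exp {q r : ℝ → ℝ}
    (hq : ∀ z ∈ Icc (0 : ℝ) 1, HasDerivWithinAt q (2 * r z) (Icc 0 1) z)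
    (hr : ContinuousOn r (Icc 0 1)) (μ : ℝ) :
    ∫ z in (0 : ℝ)..1, (r z + μ * q z) * exp (μ * (z - 1)) =
      (q 1 - exp (-μ) * q 0) / 2 + μ / 2 * ∫ z in (0 : ℝ)..1, q z * exp (μ * (z - 1)) := by
  have he : ∀ z, HasDerivAt (fun z => exp (μ * (z - 1))) (exp (μ * (z - 1)) * μ) z := fun z => by
    simpa using (((hasDerivAt_id z).sub_const 1).const_mul μ).exp
  have hqc : ContinuousOn q (Icc 0 1) := fun z hz => (hq z hz).continuousWithinAt
  have hec : ContinuousOn (fun z => exp (μ * (z - 1))) (Icc 0 1) := by fun_prop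
  have hqe : IntervalIntegrable (fun z => q z * exp (μ * (z - 1))) MeasureTheory.volume 0 1 :=
    (hqc.mul hec).intervalIntegrable_of_Icc zero_le_one
  have hre : IntervalIntegrable (fun z => r z * exp (μ * (z - 1))) MeasureTheory.volume 0 1 :=
    (hr.mul hec).intervalIntegrable_of_Icc zero_le_one
  have hderiv : ∀ z ∈ Ioo (0 : ℝ) 1, HasDerivAt (fun z => q z * exp (μ * (z - 1)))
      (2 * (r z * exp (μ * (z - 1))) + μ * (q z * exp (μ * (z - 1)))) z := fun z hz =>
    ((hq z (Ioo_subset_Icc_self hz)).hasDerivAt (Icc_mem_nhds hz.1 hz.2)).mul (he z)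
      |>.congr_deriv (by ring)
  have hFTC := intervalIntegral.integral_eq_sub_of_hasDerivAt_of_le zero_le_one
    (hqc.mul hec) hderiv ((hre.const_mul 2).add (hqe.const_mul μ))
  rw [intervalIntegral.integral_add (hre.const_mul 2) (hqe.const_mul μ),
    intervalIntegral.integral_const_mul, intervalIntegral.integral_const_mul] at hFTC
  simp only [Pi.mul_apply, sub_self, mul_zero, exp_zero, mul_one, zero_sub, mul_neg] at hFTC
  have hsplit : ∫ z in (0 : ℝ)..1, (r z + μ * q z) * exp (μ * (z - 1)) =
      (∫ z in (0 : ℝ)..1, r z * exp (μ * (z - 1))) +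
        μ * ∫ z in (0 : ℝ)..1, q z * exp (μ * (z - 1)) := by
    rw [← intervalIntegral.integral_const_mul,
      ← intervalIntegral.integral_add hre (hqe.const_mul μ)]
    exact intervalIntegral.integral_congr fun z _ => by ring
  linarith

section

variable {ι : Type*} [Fintype ι] {Λ : Matrix ι ι ℝ}

theorem Matrix.IsSymm.dotProduct_mulVec_comm (hΛ : Λ.IsSymm) (x y : ι → ℝ) :
    x ⬝ᵥ Λ *ᵥ y = y ⬝ᵥ Λ *ᵥ x := by
  rw [dotProduct_mulVec, ← mulVec_transpose, hΛ.eq, dotProduct_comm]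

variable [DecidableEq ι]

theorem ContinuousOn.dotProduct_mulVec {s : Set ℝ} {φ χ : ℝ → EuclideanSpace ℝ ι}
    (hφ : ContinuousOn φ s) (hχ : ContinuousOn χ s) :
    ContinuousOn (fun t => φ t ⬝ᵥ Λ *ᵥ χ t) s := by
  simp_rw [← inner_toEuclideanCLM]
  exact hφ.inner ((toEuclideanCLM (𝕜 := ℝ) Λ).continuous.comp_continuousOn hχ)

theorem HasDerivWithinAt.dotProduct_mulVec_self (hΛ : Λ.IsSymm) {s : Set ℝ} {z : ℝ}
    {ψ : ℝ → EuclideanSpace ℝ ι} {ψ' : EuclideanSpace ℝ ι} (hψ : HasDerivWithinAt ψ ψ' s z) :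
    HasDerivWithinAt (fun t => ψ t ⬝ᵥ Λ *ᵥ ψ t) (2 * (ψ' ⬝ᵥ Λ *ᵥ ψ z)) s z := by
  have h := hψ.inner ℝ ((toEuclideanCLM (𝕜 := ℝ) Λ).hasFDerivAt.comp_hasDerivWithinAt z hψ)
  simp only [Function.comp_apply, inner_toEuclideanCLM] at h
  exact h.congr_deriv (by rw [hΛ.dotProduct_mulVec_comm]; ring)

theorem integral_dotProduct_mulVec_mul_exp (hΛ : Λ.IsSymm) {ψ ψ' : ℝ → EuclideanSpace ℝ ι}
    (hψ : ∀ z ∈ Icc (0 : ℝ) 1, HasDerivWithinAt ψ (ψ' z) (Icc 0 1) z)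
    (hψ' : ContinuousOn ψ' (Icc 0 1)) (μ : ℝ) :
    ∫ z in (0 : ℝ)..1, ((ψ' z + μ • ψ z) ⬝ᵥ Λ *ᵥ ψ z) * exp (μ * (z - 1)) =
      (ψ 1 ⬝ᵥ Λ *ᵥ ψ 1 - exp (-μ) * (ψ 0 ⬝ᵥ Λ *ᵥ ψ 0)) / 2 +
        μ / 2 * ∫ z in (0 : ℝ)..1, (ψ z ⬝ᵥ Λ *ᵥ ψ z) * exp (μ * (z - 1)) := by
  have hψc : ContinuousOn ψ (Icc 0 1) := fun z hz => (hψ z hz).continuousWithinAt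
  rw [← integral_add_mul_mul_exp (fun z hz => (hψ z hz).dotProduct_mulVec_self hΛ)
    (hψ'.dotProduct_mulVec hψc)]
  refine intervalIntegral.integral_congr fun z _ => ?_
  simp only [WithLp.ofLp_add, WithLp.ofLp_smul, add_dotProduct, smul_dotProduct, smul_eq_mul]

theorem integral_dotProduct_diagonal_mulVec_mul_le {d : ι → ℝ} {c : ℝ} (hd : ∀ i, d i ≤ c)
    {ψ : ℝ → EuclideanSpace ℝ ι} {w : ℝ → ℝ} {a b : ℝ} (hab : a ≤ b)
    (hψ : ContinuousOn ψ (Icc a b)) (hw : ContinuousOn w (Icc a b)) (hw0 : ∀ z ∈ Icc a b, 0 ≤ w z) :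
    ∫ z in a..b, (ψ z ⬝ᵥ diagonal d *ᵥ ψ z) * w z ≤ c * ∫ z in a..b, ‖ψ z‖ ^ 2 * w z := by
  rw [← intervalIntegral.integral_const_mul]
  refine intervalIntegral.integral_mono_on hab
    (((hψ.dotProduct_mulVec hψ).mul hw).intervalIntegrable_of_Icc hab)
    ((((continuous_norm.comp_continuousOn hψ).pow 2).mul hw).const_mul c
      |>.intervalIntegrable_of_Icc hab) fun z hz => ?_
  rw [EuclideanSpace.norm_sq_eq_dotProduct, ← mul_assoc]
  exact mul_le_mul_of_nonneg_right (dotProduct_diagonal_mulVec_le hd _) (hw0 z hz)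

end

theorem stmt_13_general (n m : ℕ) (hn : 1 ≤ n) (lvec : Fin n → ℝ) (hl : ∀ i, 0 < lvec i)
    (Λ : Matrix (Fin n) (Fin n) ℝ) (hΛ : Λ = Matrix.diagonal lvec)
    (H R : Matrix (Fin n) (Fin n) ℝ) (B : Matrix (Fin n) (Fin m) ℝ)
    (K : Matrix (Fin m) (Fin n) ℝ)
    (μ : ℝ) (hμ : 0 < μ)
    (hμcond : ((1 : Matrix (Fin n) (Fin n) ℝ) -
      (Real.exp (-μ) * (⨆ i, lvec i)) • (H * Λ⁻¹ * Hᵀ + 1)).PosSemidef) :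
    ∃ C > (0:ℝ), ∀ (ψ ψ' : ℝ → EuclideanSpace ℝ (Fin n)) (θ : EuclideanSpace ℝ (Fin n)),
      (∀ z ∈ Set.Icc (0:ℝ) 1, HasDerivWithinAt ψ (ψ' z) (Set.Icc (0:ℝ) 1) z) →
      ContinuousOn ψ' (Set.Icc (0:ℝ) 1) →
      ψ 1 = Real.exp (-μ) • (Λ⁻¹ * Hᵀ * Λ).mulVec (ψ 0) →
      (∫ z in (0:ℝ)..1, ((ψ' z + μ • ψ z) ⬝ᵥ Λ.mulVec (ψ z)) * Real.exp (μ * (z - 1))) +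
          θ ⬝ᵥ (Real.exp (-μ) • (Kᵀ * Bᵀ * Λ).mulVec (ψ 0) + Rᵀ.mulVec θ) ≤
        C * ((∫ z in (0:ℝ)..1, ‖ψ z‖ ^ 2 * Real.exp (μ * (z - 1))) + ‖θ‖ ^ 2) := by
  subst hΛ
  set L := ⨆ i, lvec i
  have hlL : ∀ i, lvec i ≤ L := le_ciSup (finite_range lvec).bddAbove
  have hL : 0 < L := (hl ⟨0, hn⟩).trans_le (hlL _)
  refine ⟨μ * L / 2 + (1 + ∑ i, ∑ j, (Kᵀ * Bᵀ) i j ^ 2 + ∑ i, ∑ j, Rᵀ i j ^ 2) / 2,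
    by positivity, fun ψ ψ' θ hψ hψ' hbc => ?_⟩
  have hψc : ContinuousOn ψ (Icc 0 1) := fun z hz => (hψ z hz).continuousWithinAt
  have hboundary := dotProduct_diagonal_mulVec_sub_le_of_posSemidef hl hlL hL (exp_pos (-μ)).le
    hμcond hbc
  have hinterior := integral_dotProduct_diagonal_mulVec_mul_le hlL zero_le_one hψc
    (w := fun z => exp (μ * (z - 1))) (by fun_prop) fun z _ => (exp_pos _).le
  have hcross := two_mul_dotProduct_mulVec_le (Kᵀ * Bᵀ) θ (exp (-μ) • (diagonal lvec *ᵥ ψ 0))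
  have hR := two_mul_dotProduct_mulVec_le Rᵀ θ θ
  have hI : 0 ≤ ∫ z in (0 : ℝ)..1, ‖ψ z‖ ^ 2 * exp (μ * (z - 1)) :=
    intervalIntegral.integral_nonneg zero_le_one fun z _ => by positivity
  rw [integral_dotProduct_mulVec_mul_exp (isSymm_diagonal lvec) hψ hψ' μ,
    dotProduct_add, dotProduct_smul, ← mulVec_mulVec, smul_eq_mul]
  simp only [mulVec_smul, smul_dotProduct, dotProduct_smul, smul_eq_mul] at hcross
  rw [← EuclideanSpace.norm_sq_eq_dotProduct θ] at hcross hR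
  have hcN : 0 ≤ ∑ i, ∑ j, (Kᵀ * Bᵀ) i j ^ 2 := by positivity
  have hcR : 0 ≤ ∑ i, ∑ j, Rᵀ i j ^ 2 := by positivity
  linarith [mul_le_mul_of_nonneg_left hinterior (by positivity : 0 ≤ μ / 2),
    mul_nonneg (mul_pos hμ hL).le (sq_nonneg ‖θ‖), mul_nonneg hcN hI, mul_nonneg hcR hI]

/-- (Step 2 of the proof of Lemma 1 of the paper: quasi-dissipativity of the
adjoint operator `A*(ψ,θ) = (Λ(μψ + ψ_z), KᵀBᵀΛD(0)ψ(0) + Rᵀθ)` with `D(0) = e^{-μ} I`, on its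
domain `ψ(1) = e^{-μ} Λ⁻¹ Hᵀ Λ ψ(0)`, with respect to the weighted inner product
`⟨(φ,η),(ψ,θ)⟩_μ = ∫₀¹ φᵀψ e^{μ(z-1)} dz + θᵀη`, for `μ` large enough.
The spectral condition `e^{-μ} λ_max(Λ) λ_max(H Λ⁻¹ Hᵀ + I) ≤ 1` is expressed equivalently in
the Loewner order as `e^{-μ} λ_max(Λ) (H Λ⁻¹ Hᵀ + I) ⪯ I`. -/
theorem stmt_13 (n m : ℕ) (hn : 1 ≤ n) (hm : 1 ≤ m)
    (lvec : Fin n → ℝ) (hl : ∀ i, 0 < lvec i)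
    (Λ : Matrix (Fin n) (Fin n) ℝ) (hΛ : Λ = Matrix.diagonal lvec)
    (H R : Matrix (Fin n) (Fin n) ℝ) (B : Matrix (Fin n) (Fin m) ℝ)
    (K : Matrix (Fin m) (Fin n) ℝ)
    (μ : ℝ) (hμ : 0 < μ)
    (hμcond : ((1 : Matrix (Fin n) (Fin n) ℝ) -
      (Real.exp (-μ) * (⨆ i, lvec i)) • (H * Λ⁻¹ * Hᵀ + 1)).PosSemidef) :
    ∃ C > (0:ℝ), ∀ (ψ ψ' : ℝ → EuclideanSpace ℝ (Fin n)) (θ : EuclideanSpace ℝ (Fin n)),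
      (∀ z ∈ Set.Icc (0:ℝ) 1, HasDerivWithinAt ψ (ψ' z) (Set.Icc (0:ℝ) 1) z) →
      ContinuousOn ψ' (Set.Icc (0:ℝ) 1) →
      ψ 1 = Real.exp (-μ) • (Λ⁻¹ * Hᵀ * Λ).mulVec (ψ 0) →
      (∫ z in (0:ℝ)..1, ((ψ' z + μ • ψ z) ⬝ᵥ Λ.mulVec (ψ z)) * Real.exp (μ * (z - 1))) +
          θ ⬝ᵥ (Real.exp (-μ) • (Kᵀ * Bᵀ * Λ).mulVec (ψ 0) + Rᵀ.mulVec θ) ≤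
        C * ((∫ z in (0:ℝ)..1, ‖ψ z‖ ^ 2 * Real.exp (μ * (z - 1))) + ‖θ‖ ^ 2) :=
  stmt_13_general n m hn lvec hl Λ hΛ H R B K μ hμ hμcond
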